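/- arXiv:2211.10001 — 4 statements merged into one kernel-verified Lean document; each statement's English description precedes it below -/
import Mathlib

section
/- Merkle verification is complete: for any list of data blocks x₁,...,xₙ, if M = Mtree(x₁,...,xₙ) with root r, then for every index i, Mvrfy(i, r, xᵢ, Mproof(M, i)) = true. -/
/-- A perfect binary tree of depth `k` with data blocks at the leaves. -/
inductive PTree (β : Type) : ℕ → Type
  | leaf : β → PTree β 0
  | node : {k : ℕ} → PTree β k → PTree β k → PTree β (k + 1)

variable {α β : Type}

/-- The Merkle root of a tree: leaves are hashed with `h₀`, internal nodes with `h`. -/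
def PTree.root (h : α → α → α) (h₀ : β → α) : {k : ℕ} → PTree β k → α
  | 0, .leaf b => h₀ b
  | _ + 1, .node l r => h (l.root h h₀) (r.root h h₀)

/-- `Mtree`: build the perfect Merkle tree on the `2^k` data blocks indexed by
bit-paths `Fin k → Bool` (`false` = left, `true` = right). -/
def Mtree : (k : ℕ) → ((Fin k → Bool) → β) → PTree β k
  | 0, f => .leaf (f (fun j => j.elim0))
  | k + 1, f =>
      .node (Mtree k (fun q => f (Fin.cons false q))) (Mtree k (fun q => f (Fin.cons true q)))

/-- `Mproof`: the authentication path (list of sibling hashes, root-to-leaf) for the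
leaf at bit-path `p`. -/
def Mproof (h : α → α → α) (h₀ : β → α) : {k : ℕ} → PTree β k → (Fin k → Bool) → List α
  | 0, .leaf _, _ => []
  | _ + 1, .node l r, p =>
      if p 0 then l.root h h₀ :: Mproof h h₀ r (fun j => p j.succ)
      else r.root h h₀ :: Mproof h h₀ l (fun j => p j.succ)

/-- Recompute the candidate root from a leaf hash `cur`, combining with the sibling
hashes in `π` on the side determined by the bits of the index. -/
def computeRoot (h : α → α → α) : List Bool → List α → α → α
  | b :: bs, s :: ss, cur =>
      if b then h s (computeRoot h bs ss cur) else h (computeRoot h bs ss cur) s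
  | _, _, cur => cur

/-- `Mvrfy i r x π`: verification succeeds iff recomputing the root from `h₀ x` along
the authentication path `π` (sides given by the bits of `i`) yields `r`. -/
def Mvrfy (h : α → α → α) (h₀ : β → α) (i : List Bool) (r : α) (x : β) (π : List α) : Prop :=
  π.length = i.length ∧ computeRoot h i π (h₀ x) = r

/-! Completeness holds for every perfect tree, not only those built by `Mtree`: the authentication
path of leaf `p` recomputes the root from the hash of the block stored at `p`, by induction on the
depth. It remains to observe that `Mtree` stores `data p` at `p`. -/

namespace PTree

def get : {k : ℕ} → PTree β k → (Fin k → Bool) → β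
  | 0, .leaf b, _ => b
  | _ + 1, .node l r, p => if p 0 then r.get (Fin.tail p) else l.get (Fin.tail p)

theorem length_Mproof (h : α → α → α) (h₀ : β → α) :
    {k : ℕ} → (t : PTree β k) → (p : Fin k → Bool) → (Mproof h h₀ t p).length = k
  | 0, .leaf _, _ => rfl
  | _ + 1, .node l r, p => by
    cases hp : p 0 <;> simp [Mproof, hp, length_Mproof h h₀ l, length_Mproof h h₀ r]

theorem computeRoot_Mproof (h : α → α → α) (h₀ : β → α) :
    {k : ℕ} → (t : PTree β k) → (p : Fin k → Bool) →
      computeRoot h (List.ofFn p) (Mproof h h₀ t p) (h₀ (t.get p)) = t.root h h₀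
  | 0, .leaf _, _ => rfl
  | _ + 1, .node l r, p => by
    have hl := computeRoot_Mproof h h₀ l (Fin.tail p)
    have hr := computeRoot_Mproof h h₀ r (Fin.tail p)
    rw [List.ofFn_succ]
    cases hp : p 0
    · simp only [Mproof, computeRoot, get, root, hp, Bool.false_eq_true, if_false]
      exact congrArg (h · _) hl
    · simp only [Mproof, computeRoot, get, root, hp, if_true]
      exact congrArg (h _) hr

end PTree

theorem Mtree_get : (k : ℕ) → (data : (Fin k → Bool) → β) → (p : Fin k → Bool) →
    (Mtree k data).get p = data p
  | 0, data, p => congrArg data (funext fun j => j.elim0)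
  | k + 1, data, p => by
    rw [← Fin.cons_self_tail p]
    cases p 0 <;> simp [Mtree, PTree.get, Mtree_get k]

/-- Merkle verification is complete: for any data blocks and any index, the honestly
generated proof for that index verifies against the Merkle root. -/
theorem merkle_complete (h : α → α → α) (h₀ : β → α) (k : ℕ)
    (data : (Fin k → Bool) → β) (i : Fin k → Bool) :
    Mvrfy h h₀ (List.ofFn i) ((Mtree k data).root h h₀) (data i)
      (Mproof h h₀ (Mtree k data) i) := by
  refine ⟨by rw [PTree.length_Mproof, List.length_ofFn], ?_⟩
  rw [← Mtree_get k data i]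
  exact PTree.computeRoot_Mproof h h₀ (Mtree k data) i
end

section
/- If the node hash function h and the leaf hash h₀ are both injective, then the Merkle root determines the data: for two lists of data blocks of the same length n, Mtree root equality implies the lists are equal. In particular, the BDTS contract's rejection of any registration whose Merkle root r_d coincides with a previously recorded root prevents re-registration (reselling) of the same data under this injectivity assumption. -/
variable {α β : Type}

/-- If the node hash `h` and leaf hash `h₀` are injective, the Merkle root determines
the data: equal roots for two families of `2^k` data blocks imply equal data. Hence the
BDTS contract's rejection of duplicate roots prevents re-registration of the same data. -/
theorem merkle_root_binds_data (h : α → α → α) (h₀ : β → α)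
    (hinj : ∀ u v u' v' : α, h u v = h u' v' → u = u' ∧ v = v')
    (h₀inj : Function.Injective h₀) (k : ℕ) (f g : (Fin k → Bool) → β)
    (hroot : (Mtree k f).root h h₀ = (Mtree k g).root h h₀) : f = g := by
  induction k with
  | zero =>
    funext p
    have hp : p = fun j => j.elim0 := funext fun j => j.elim0
    simpa [Mtree, PTree.root, hp] using h₀inj hroot
  | succ k ih =>
    simp only [Mtree, PTree.root] at hroot
    obtain ⟨h1, h2⟩ := hinj _ _ _ _ hroot
    have e1 := ih _ _ h1
    have e2 := ih _ _ h2
    funext p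
    have hp : p = Fin.cons (p 0) (fun j => p j.succ) := (Fin.cons_self_tail p).symm
    rw [hp]
    cases p 0 with
    | false => exact congrFun e1 _
    | true => exact congrFun e2 _
end

section
/- Merkle verification is sound under injective hashing: if h and h₀ are injective and Mvrfy(i, r, x, π) = true and Mvrfy(i, r, x', π') = true for the same index i and root r, with authentication paths π, π' of the same length, then x = x' and π = π'. -/
variable {α β : Type}

/-- Merkle verification is sound under injective hashing: two verifications for the
same index and root, with authentication paths of the same length, must involve the
same leaf data and the same path. -/
theorem merkle_verify_sound (h : α → α → α) (h₀ : β → α)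
    (hinj : ∀ u v u' v' : α, h u v = h u' v' → u = u' ∧ v = v')
    (h₀inj : Function.Injective h₀) (i : List Bool) (r : α) (x x' : β) (π π' : List α)
    (h1 : Mvrfy h h₀ i r x π) (h2 : Mvrfy h h₀ i r x' π')
    (hlen : π.length = π'.length) : x = x' ∧ π = π' := by
  obtain ⟨l1, e1⟩ := h1
  obtain ⟨l2, e2⟩ := h2
  clear hlen
  induction i generalizing π π' r with
  | nil =>
    cases π <;> simp_all [computeRoot]
    exact h₀inj (e1.trans e2.symm)
  | cons b bs ih =>
    cases π with
    | nil => simp at l1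
    | cons s ss =>
      cases π' with
      | nil => simp at l2
      | cons s' ss' =>
        simp [computeRoot] at e1 e2
        cases b <;> simp at e1 e2
        · obtain ⟨hc, hs⟩ := hinj _ _ _ _ (e1.trans e2.symm)
          simp at l1 l2
          obtain ⟨hx, hss⟩ := ih _ ss ss' l1 hc l2 rfl
          exact ⟨hx, by simp [hs, hss]⟩
        · obtain ⟨hs, hc⟩ := hinj _ _ _ _ (e1.trans e2.symm)
          simp at l1 l2
          obtain ⟨hx, hss⟩ := ih _ ss ss' l1 hc l2 rfl
          exact ⟨hx, by simp [hs, hss]⟩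
end

section
/- Appeal-judgment correctness: with a sound Merkle verification (injective hashes) and correct encryption schemes, the consumer's appeal against the service provider succeeds if and only if the service provider delivered a wrong block: letting K = Dec_{Pri_cm}(Enc_{Pub_cm}(K_sp)) and D' = Dec^AES_K(c) for delivered ciphertext c, the contract's check Mvrfy(i, r_ed, D', P_ed) fails iff c ≠ Enc^AES_{K_sp}(Dᵢ), where Dᵢ is the i-th block committed under root r_ed. -/
variable {α β : Type}

def PTree.get_s17 : {k : ℕ} → PTree β k → (Fin k → Bool) → β
  | 0, .leaf b, _ => b
  | _ + 1, .node l r, p => if p 0 then r.get_s17 (fun j => p j.succ) else l.get_s17 (fun j => p j.succ)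

theorem PTree.get_Mtree : ∀ {k : ℕ} (D : (Fin k → Bool) → β) (p : Fin k → Bool),
    (Mtree k D).get_s17 p = D p
  | 0, D, p => congrArg D (funext fun j => j.elim0)
  | k + 1, D, p => by
    have hp : Fin.cons (p 0) (fun j => p j.succ) = p := Fin.cons_self_tail p
    cases hb : p 0 <;>
      simp only [Mtree, get_s17, hb, Bool.false_eq_true, if_true, if_false, get_Mtree] <;>
      rw [← hb, hp]

theorem length_Mproof (h : α → α → α) (h₀ : β → α) :
    ∀ {k : ℕ} (t : PTree β k) (p : Fin k → Bool), (Mproof h h₀ t p).length = k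
  | 0, .leaf _, _ => rfl
  | _ + 1, .node l r, p => by
    cases hb : p 0 <;> simp [Mproof, hb, length_Mproof]

theorem computeRoot_Mproof_eq_root_iff {h : α → α → α} (hinj : Function.Injective2 h)
    (h₀ : β → α) : ∀ {k : ℕ} (t : PTree β k) (p : Fin k → Bool) (a : α),
      computeRoot h (List.ofFn p) (Mproof h h₀ t p) a = t.root h h₀ ↔ a = h₀ (t.get_s17 p)
  | 0, .leaf _, _, _ => Iff.rfl
  | _ + 1, .node l r, p, a => by
    rw [List.ofFn_succ]
    cases hb : p 0
    · simp only [Mproof, computeRoot, PTree.root, PTree.get_s17, hb, Bool.false_eq_true, if_false,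
        hinj.eq_iff, and_true, computeRoot_Mproof_eq_root_iff hinj h₀ l]
    · simp only [Mproof, computeRoot, PTree.root, PTree.get_s17, hb, if_true,
        hinj.eq_iff, true_and, computeRoot_Mproof_eq_root_iff hinj h₀ r]

theorem mvrfy_root_Mproof_iff {h : α → α → α} (hinj : Function.Injective2 h) {h₀ : β → α}
    (h₀inj : Function.Injective h₀) {k : ℕ} (t : PTree β k) (p : Fin k → Bool) (x : β) :
    Mvrfy h h₀ (List.ofFn p) (t.root h h₀) x (Mproof h h₀ t p) ↔ x = t.get_s17 p := by
  rw [Mvrfy, computeRoot_Mproof_eq_root_iff hinj h₀, h₀inj.eq_iff, length_Mproof,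
    List.length_ofFn]
  exact and_iff_right rfl

theorem appeal_judgment_correct_general {Key KeyCipher PubKey PriKey : Type}
    (h : α → α → α) (h₀ : β → α)
    (hinj : ∀ u v u' v' : α, h u v = h u' v' → u = u' ∧ v = v')
    (h₀inj : Function.Injective h₀)
    (EncS : Key → β → β) (DecS : Key → β → β)
    (EncA : PubKey → Key → KeyCipher) (DecA : PriKey → KeyCipher → Key)
    (pub : PubKey) (pri : PriKey)
    (hSymDec : ∀ (K : Key) (m : β), DecS K (EncS K m) = m)
    (hSymEnc : ∀ (K : Key) (c : β), EncS K (DecS K c) = c)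
    (hAsym : ∀ K : Key, DecA pri (EncA pub K) = K)
    (k : ℕ) (D : (Fin k → Bool) → β) (i : Fin k → Bool) (K_sp : Key) (c : β) :
    ¬ Mvrfy h h₀ (List.ofFn i) ((Mtree k D).root h h₀)
        (DecS (DecA pri (EncA pub K_sp)) c) (Mproof h h₀ (Mtree k D) i) ↔
      c ≠ EncS K_sp (D i) := by
  let E : β ≃ β := ⟨EncS K_sp, DecS K_sp, hSymDec K_sp, hSymEnc K_sp⟩
  rw [hAsym, mvrfy_root_Mproof_iff (fun _ _ _ _ huv => hinj _ _ _ _ huv) h₀inj,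
    PTree.get_Mtree]
  exact not_congr E.symm_apply_eq

/-- Appeal-judgment correctness: with injective hashes (sound Merkle verification) and
correct encryption schemes (the symmetric cipher being a correct, hence bijective,
scheme), the contract's appeal check against the committed root `r_ed` of the encrypted
blocks fails exactly when the service provider delivered a wrong ciphertext: letting
`K = DecA pri (EncA pub K_sp)` and `D' = DecS K c`, verification of `D'` at index `i`
with the honest proof `P_ed` fails iff `c ≠ EncS K_sp (D i)`. -/
theorem appeal_judgment_correct {Key KeyCipher PubKey PriKey : Type}
    (h : α → α → α) (h₀ : β → α)
    (hinj : ∀ u v u' v' : α, h u v = h u' v' → u = u' ∧ v = v')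
    (h₀inj : Function.Injective h₀)
    (EncS : Key → β → β) (DecS : Key → β → β)
    (EncA : PubKey → Key → KeyCipher) (DecA : PriKey → KeyCipher → Key)
    (pub : PubKey) (pri : PriKey)
    (hSymDec : ∀ (K : Key) (m : β), DecS K (EncS K m) = m)
    (hSymEnc : ∀ (K : Key) (c : β), EncS K (DecS K c) = c)
    (hSymInj : ∀ K : Key, Function.Injective (EncS K))
    (hAsym : ∀ K : Key, DecA pri (EncA pub K) = K)
    (k : ℕ) (D : (Fin k → Bool) → β) (i : Fin k → Bool) (K_sp : Key) (c : β) :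
    ¬ Mvrfy h h₀ (List.ofFn i) ((Mtree k D).root h h₀)
        (DecS (DecA pri (EncA pub K_sp)) c) (Mproof h h₀ (Mtree k D) i) ↔
      c ≠ EncS K_sp (D i) :=
  appeal_judgment_correct_general h h₀ hinj h₀inj EncS DecS EncA DecA pub pri hSymDec hSymEnc hAsym
    k D i K_sp c
end
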